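/- arXiv:2203.11282 — 6 statements merged into one kernel-verified Lean document; each statement's English description precedes it below -/
import Mathlib

section
/- Let M and N be compact metric spaces and (F_i)_{i∈ℕ} a sequence of maps F_i : M → (nonempty closed subsets of N) satisfying: (1) for every x ∈ M, every i, and every open neighborhood U of F_i(x), there is a neighborhood V of x such that every x' ∈ V admits some j > i with F_j(x') ⊆ U; (2) F_{i+1}(x) ⊆ F_i(x) for all i and x; (3) diam(F_i(x)) → 0 for every x. Then the map f : M → N defined by {f(x)} = ⋂_{i∈ℕ} F_i(x) is well-defined and continuous. -/
/-!
By Cantor's intersection theorem in the compact space `N`, each `⋂ i, F i x` is nonempty, and it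
is a single point because the diameters shrink to `0`. Continuity of the resulting map `f` at `x`:
pick `i` with `diam (F i x) < ε / 2`; by (1) every `y` near `x` has `f y ∈ F j y ⊆ U` for some
`j`, where `U` is the open `ε / 2`-thickening of `F i x`, so `f y` lies within `ε` of `f x ∈ F i x`.
-/

open Filter Topology Metric

theorem Metric.subsingleton_iInter_of_tendsto_diam {N : Type*} [MetricSpace N] {s : ℕ → Set N}
    (hb : ∀ i, Bornology.IsBounded (s i)) (hdiam : Tendsto (fun i => diam (s i)) atTop (𝓝 0)) :
    (⋂ i, s i).Subsingleton := by
  intro y hy z hz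
  rw [Set.mem_iInter] at hy hz
  have hyz : dist y z ≤ 0 :=
    ge_of_tendsto hdiam (Eventually.of_forall fun i => dist_le_diam_of_mem (hb i) (hy i) (hz i))
  exact dist_le_zero.mp hyz

theorem continuous_of_forall_mem_of_tendsto_diam {M N : Type*} [TopologicalSpace M]
    [PseudoMetricSpace N] (F : ℕ → M → Set N) (f : M → N) (hf : ∀ i x, f x ∈ F i x)
    (hb : ∀ i x, Bornology.IsBounded (F i x))
    (hF : ∀ x i, ∀ U ∈ 𝓝ˢ (F i x), ∃ V ∈ 𝓝 x, ∀ x' ∈ V, ∃ j > i, F j x' ⊆ U)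
    (hdiam : ∀ x, Tendsto (fun i => diam (F i x)) atTop (𝓝 0)) :
    Continuous f := by
  refine continuous_iff_continuousAt.mpr fun x => Metric.tendsto_nhds.mpr fun ε hε => ?_
  obtain ⟨i, hi⟩ := ((hdiam x).eventually (gt_mem_nhds (half_pos hε))).exists
  have hU : thickening (ε / 2) (F i x) ∈ 𝓝ˢ (F i x) :=
    isOpen_thickening.mem_nhdsSet.mpr (self_subset_thickening (half_pos hε) _)
  obtain ⟨V, hV, hVsub⟩ := hF x i _ hU
  filter_upwards [hV] with y hy
  obtain ⟨j, -, hj⟩ := hVsub y hy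
  obtain ⟨z, hz, hyz⟩ := mem_thickening_iff.mp (hj (hf j y))
  calc dist (f y) (f x) ≤ dist (f y) z + dist z (f x) := dist_triangle _ _ _
    _ < ε / 2 + ε / 2 := add_lt_add_of_lt_of_le hyz
        ((dist_le_diam_of_mem (hb i x) hz (hf i x)).trans hi.le)
    _ = ε := add_halves ε

theorem stmt0_general {M N : Type*} [MetricSpace M] [MetricSpace N] [CompactSpace N]
    (F : ℕ → M → Set N)
    (hcl : ∀ i x, IsClosed (F i x)) (hne : ∀ i x, (F i x).Nonempty)
    (h1 : ∀ x i, ∀ U ∈ nhdsSet (F i x), ∃ V ∈ nhds x, ∀ x' ∈ V, ∃ j > i, F j x' ⊆ U)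
    (h2 : ∀ i x, F (i + 1) x ⊆ F i x)
    (h3 : ∀ x, Tendsto (fun i => diam (F i x)) atTop (nhds 0)) :
    ∃ f : M → N, Continuous f ∧ ∀ x, (⋂ i, F i x) = {f x} := by
  have hsingleton : ∀ x, ∃ y, (⋂ i, F i x) = {y} := fun x =>
    Set.exists_eq_singleton_iff_nonempty_subsingleton.mpr
      ⟨IsCompact.nonempty_iInter_of_sequence_nonempty_isCompact_isClosed (F · x) (h2 · x)
          (hne · x) (hcl 0 x).isCompact (hcl · x),
        subsingleton_iInter_of_tendsto_diam (fun _ => isBounded_of_compactSpace) (h3 x)⟩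
  choose f hf using hsingleton
  have hmem : ∀ i x, f x ∈ F i x := fun i x =>
    Set.mem_iInter.mp ((hf x).symm ▸ Set.mem_singleton (f x)) i
  exact ⟨f, continuous_of_forall_mem_of_tendsto_diam F f hmem
    (fun _ _ => isBounded_of_compactSpace) h1 h3, hf⟩

/-- Fort-type approximation: a nested sequence of set-valued maps with shrinking
diameters and the given lower-semicontinuity property determines a continuous map. -/
theorem stmt0 {M N : Type*} [MetricSpace M] [CompactSpace M] [MetricSpace N] [CompactSpace N]
    (F : ℕ → M → Set N)
    (hcl : ∀ i x, IsClosed (F i x)) (hne : ∀ i x, (F i x).Nonempty)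
    (h1 : ∀ x i, ∀ U ∈ nhdsSet (F i x), ∃ V ∈ nhds x, ∀ x' ∈ V, ∃ j > i, F j x' ⊆ U)
    (h2 : ∀ i x, F (i + 1) x ⊆ F i x)
    (h3 : ∀ x, Tendsto (fun i => diam (F i x)) atTop (nhds 0)) :
    ∃ f : M → N, Continuous f ∧ ∀ x, (⋂ i, F i x) = {f x} :=
  stmt0_general F hcl hne h1 h2 h3
end

section
/- Let X be a metrizable, locally compact, strongly locally homogeneous space and let X̄ be a metric compactification of X (i.e. a compact metric space containing X as a dense open subspace). If A and B are countable dense subsets of X, then there exists a homeomorphism f : X̄ → X̄ with f(A) = B and f restricted to X̄ − X equal to the identity. -/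
/-!
Bennett's back-and-forth argument. Given `p ∈ X`, a finite set `S ∌ p` and `ε > 0`, strong local
homogeneity applied inside a compact neighbourhood of `p` in `X ∩ ball p (ε / 2) − S` gives a
homeomorphism of `X` moving `p` into any prescribed dense set and supported in that compact set,
so it extends by the identity to `X̄`, fixes `S` and moves points by at most `ε`. Composing such
moves (and their inverses) matches the `n`-th point of `A` into `B` and the `n`-th point of `B`
into the image of `A` while keeping all earlier matches. If each displacement bound is also small
for the uniform continuity of the inverse of the current composite, the composites converge
uniformly to an injective, hence (by compactness) homeomorphic, limit, which is the identity on
`X̄ − X` and maps `A` onto `B`.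
-/

def StronglyLocallyHomogeneous (X : Type*) [TopologicalSpace X] : Prop :=
  ∀ x : X, ∀ U ∈ nhds x, ∃ V : Set X, IsOpen V ∧ x ∈ V ∧ V ⊆ U ∧
    ∀ y ∈ V, ∃ f : X ≃ₜ X, f x = y ∧ ∀ z ∉ U, f z = z

open Set Filter Topology Function Metric

theorem Function.Injective.mapsTo_of_apply_eq_self {α : Type*} {f : α → α} (hf : Injective f)
    {s : Set α} (h : ∀ z ∉ s, f z = z) : MapsTo f s s := fun z hz => by
  by_contra hfz
  exact hfz (by rwa [hf (h _ hfz)])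

section Extension

variable {Y : Type*} [TopologicalSpace Y] {X K : Set Y}

theorem continuous_ofSubtype_of_apply_eq_self [DecidablePred (· ∈ X)] (hX : IsOpen X)
    (hK : IsClosed K) (hKX : K ⊆ X) (f : X ≃ₜ X) (hf : ∀ z : X, (z : Y) ∉ K → f z = z) :
    Continuous (Equiv.Perm.ofSubtype f.toEquiv) := by
  refine continuous_iff_continuousAt.2 fun y => ?_
  by_cases hy : y ∈ X
  · have hrestrict : X.domRestrict (Equiv.Perm.ofSubtype f.toEquiv) = (↑) ∘ f := by
      funext z
      exact Equiv.Perm.ofSubtype_apply_coe _ z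
    refine ContinuousOn.continuousAt ?_ (hX.mem_nhds hy)
    rw [continuousOn_iff_continuous_domRestrict, hrestrict]
    exact continuous_subtype_val.comp f.continuous
  · refine continuousAt_id.congr ?_
    filter_upwards [hK.isOpen_compl.mem_nhds fun hyK => hy (hKX hyK)] with z hz
    by_cases hzX : z ∈ X
    · rw [Equiv.Perm.ofSubtype_apply_of_mem _ hzX]
      exact (congrArg Subtype.val (hf ⟨z, hzX⟩ hz)).symm
    · exact (Equiv.Perm.ofSubtype_apply_of_not_mem _ hzX).symm

theorem exists_homeomorph_extend_of_apply_eq_self (hX : IsOpen X) (hK : IsClosed K) (hKX : K ⊆ X)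
    (f : X ≃ₜ X) (hf : ∀ z : X, (z : Y) ∉ K → f z = z) :
    ∃ h : Y ≃ₜ Y, (∀ z : X, h z = f z) ∧ ∀ z ∉ X, h z = z := by
  classical
  have hf_symm : ∀ z : X, (z : Y) ∉ K → f.symm z = z := fun z hz =>
    f.symm_apply_eq.2 (hf z hz).symm
  refine ⟨⟨Equiv.Perm.ofSubtype f.toEquiv,
    continuous_ofSubtype_of_apply_eq_self hX hK hKX f hf, ?_⟩,
    Equiv.Perm.ofSubtype_apply_coe _, fun z hz => Equiv.Perm.ofSubtype_apply_of_not_mem _ hz⟩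
  convert continuous_ofSubtype_of_apply_eq_self hX hK hKX f.symm hf_symm using 1
  exact congrArg DFunLike.coe (map_inv Equiv.Perm.ofSubtype f.toEquiv).symm

end Extension

namespace StronglyLocallyHomogeneous

variable {Y : Type*} {X : Set Y}

theorem exists_homeomorph_apply_mem [TopologicalSpace Y] [T2Space Y]
    (hslh : StronglyLocallyHomogeneous X) [LocallyCompactSpace X] (hX : IsOpen X)
    {W : Set Y} (hW : IsOpen W) (hWX : W ⊆ X) {p : Y} (hp : p ∈ W) {D : Set Y} (hD : Dense D) :
    ∃ h : Y ≃ₜ Y, h p ∈ D ∧ ∀ z ∉ W, h z = z := by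
  have hpX := hWX hp
  obtain ⟨K, hK, hpK, hKW⟩ := exists_compact_subset (hW.preimage continuous_subtype_val)
    (show (⟨p, hpX⟩ : X) ∈ (↑) ⁻¹' W from hp)
  obtain ⟨V, hV, hpV, -, hVhom⟩ := hslh ⟨p, hpX⟩ (interior K) (isOpen_interior.mem_nhds hpK)
  obtain ⟨_, hyD, y, hyV, rfl⟩ :=
    hD.exists_mem_open (hX.isOpenMap_subtype_val V hV) ⟨p, ⟨_, hpV, rfl⟩⟩
  obtain ⟨f, rfl, hf⟩ := hVhom y hyV
  have hfK : ∀ z : X, (z : Y) ∉ (↑) '' K → f z = z := fun z hz =>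
    hf z fun hzK => hz ⟨z, interior_subset hzK, rfl⟩
  obtain ⟨h, hhX, hhXc⟩ := exists_homeomorph_extend_of_apply_eq_self hX
    (hK.image continuous_subtype_val).isClosed (image_subset_iff.2 fun z _ => z.2) f hfK
  refine ⟨h, (hhX ⟨p, hpX⟩).symm ▸ hyD, fun z hzW => ?_⟩
  by_cases hzX : z ∈ X
  · refine (hhX ⟨z, hzX⟩).trans (congrArg Subtype.val (hfK _ ?_))
    rintro ⟨w, hwK, hwz : (w : Y) = z⟩
    exact hzW (hwz ▸ hKW hwK)
  · exact hhXc z hzX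

theorem exists_homeomorph_dist_le [MetricSpace Y]
    (hslh : StronglyLocallyHomogeneous X) [LocallyCompactSpace X] (hX : IsOpen X)
    {p : Y} (hp : p ∈ X) {S : Set Y} (hS : S.Finite) (hpS : p ∉ S) {D : Set Y} (hD : Dense D)
    {ε : ℝ} (hε : 0 < ε) :
    ∃ h : Y ≃ₜ Y, h p ∈ D ∧ (∀ s ∈ S, h s = s) ∧ (∀ z ∉ X, h z = z) ∧ ∀ x, dist x (h x) ≤ ε := by
  set W := X ∩ ball p (ε / 2) ∩ Sᶜ
  obtain ⟨h, hpD, hW⟩ := hslh.exists_homeomorph_apply_mem hX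
    ((hX.inter isOpen_ball).inter hS.isClosed.isOpen_compl) (fun z hz => hz.1.1)
    (show p ∈ W from ⟨⟨hp, mem_ball_self (half_pos hε)⟩, hpS⟩) hD
  refine ⟨h, hpD, fun s hs => hW s fun hsW => hsW.2 hs, fun z hz => hW z fun hzW => hz hzW.1.1,
    fun x => ?_⟩
  by_cases hx : x ∈ W
  · have hhx := h.injective.mapsTo_of_apply_eq_self hW hx
    calc dist x (h x) ≤ dist x p + dist (h x) p := dist_triangle_right _ _ _
      _ ≤ ε / 2 + ε / 2 := add_le_add (mem_ball.1 hx.1.2).le (mem_ball.1 hhx.1.2).le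
      _ = ε := add_halves ε
  · rw [hW x hx, dist_self]
    exact hε.le

theorem exists_homeomorph_mapsTo_insert [MetricSpace Y]
    (hslh : StronglyLocallyHomogeneous X) [LocallyCompactSpace X] (hX : IsOpen X)
    {B : Set Y} (hBd : Dense B) {F : Y ≃ₜ Y} (hF : ∀ z ∉ X, F z = z)
    {S : Set Y} (hS : S.Finite) (hSB : MapsTo F S B) {a : Y} (ha : a ∈ X) {ε : ℝ} (hε : 0 < ε) :
    ∃ G : Y ≃ₜ Y, MapsTo G (insert a S) B ∧ EqOn G F S ∧ (∀ z ∉ X, G z = z) ∧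
      ∀ x, dist (F x) (G x) ≤ ε := by
  by_cases hFa : F a ∈ B
  · refine ⟨F, fun x hx => ?_, eqOn_refl _ _, hF, fun x => by simpa using hε.le⟩
    rcases hx with rfl | hx
    exacts [hFa, hSB hx]
  obtain ⟨h, hhB, hhS, hhX, hhd⟩ := hslh.exists_homeomorph_dist_le hX
    (F.injective.mapsTo_of_apply_eq_self hF ha) (hS.image F)
    (fun ⟨x, hx, hxa⟩ => hFa (hxa ▸ hSB hx)) hBd hε
  have hGF : EqOn (F.trans h) F S := fun x hx => hhS _ (mem_image_of_mem F hx)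
  refine ⟨F.trans h, fun x hx => ?_, hGF, fun z hz => ?_, fun x => hhd (F x)⟩
  · rcases hx with rfl | hx
    exacts [hhB, hGF hx ▸ hSB hx]
  · exact (congrArg h (hF z hz)).trans (hhX z hz)

theorem exists_homeomorph_mem_image [MetricSpace Y]
    (hslh : StronglyLocallyHomogeneous X) [LocallyCompactSpace X] (hX : IsOpen X)
    {A : Set Y} (hAd : Dense A) {F : Y ≃ₜ Y} (hF : ∀ z ∉ X, F z = z)
    {S : Set Y} (hS : S.Finite) (hSA : S ⊆ A) {b : Y} (hb : b ∈ X) {ε : ℝ} (hε : 0 < ε) :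
    ∃ G : Y ≃ₜ Y, b ∈ G '' A ∧ EqOn G F S ∧ (∀ z ∉ X, G z = z) ∧
      ∀ x, dist (F x) (G x) ≤ ε := by
  by_cases hbA : b ∈ F '' A
  · exact ⟨F, hbA, eqOn_refl _ _, hF, fun x => by simpa using hε.le⟩
  obtain ⟨h, ⟨x, hxA, hx⟩, hhS, hhX, hhd⟩ := hslh.exists_homeomorph_dist_le hX hb (hS.image F)
    (fun hbS => hbA (image_mono hSA hbS)) (F.isDenseEmbedding.dense_image.2 hAd) hε
  refine ⟨F.trans h.symm, ⟨x, hxA, (h.symm_apply_eq.2 hx : h.symm (F x) = b)⟩,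
    fun y hy => h.symm_apply_eq.2 (hhS _ (mem_image_of_mem F hy)).symm,
    fun z hz => h.symm_apply_eq.2 ((hhX z hz).trans (hF z hz).symm).symm, fun y => ?_⟩
  simpa [dist_comm] using hhd (h.symm (F y))

end StronglyLocallyHomogeneous

theorem Homeomorph.exists_pos_dist_lt_of_dist_apply_lt {Y : Type*} [MetricSpace Y]
    [CompactSpace Y] (G : Y ≃ₜ Y) {c : ℝ} (hc : 0 < c) :
    ∃ η > 0, ∀ x y, dist (G x) (G y) < η → dist x y < c := by
  obtain ⟨η, hη, h⟩ := Metric.uniformContinuous_iff.1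
    (CompactSpace.uniformContinuous_of_continuous G.symm.continuous) c hc
  exact ⟨η, hη, fun x y hxy => by simpa using h hxy⟩

section Halving

variable {e : ℕ → ℝ}

theorem le_div_two_pow_of_le_half (he : ∀ n, e (n + 1) ≤ e n / 2) (n k : ℕ) :
    e (n + k) ≤ e n / 2 ^ k := by
  induction k with
  | zero => simp
  | succ k ih =>
    calc e (n + (k + 1)) ≤ e (n + k) / 2 := he _
      _ ≤ e n / 2 ^ k / 2 := by gcongr
      _ = e n / 2 ^ (k + 1) := by rw [pow_succ, div_div]

theorem tendsto_zero_of_le_half (he0 : ∀ n, 0 ≤ e n) (he : ∀ n, e (n + 1) ≤ e n / 2) :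
    Tendsto e atTop (𝓝 0) :=
  squeeze_zero he0 (fun n => by simpa using le_div_two_pow_of_le_half he 0 n)
    (tendsto_const_nhds.div_atTop (tendsto_pow_atTop_atTop_of_one_lt one_lt_two))

theorem exists_continuous_dist_le_of_dist_succ_le_half {α β : Type*} [TopologicalSpace α]
    [MetricSpace β] [CompleteSpace β] (F : ℕ → α → β) (hcont : ∀ n, Continuous (F n))
    (he0 : ∀ n, 0 ≤ e n) (he : ∀ n, e (n + 1) ≤ e n / 2)
    (hF : ∀ n x, dist (F n x) (F (n + 1) x) ≤ e n) :
    ∃ f : α → β, Continuous f ∧ ∀ n x, dist (F n x) (f x) ≤ 2 * e n := by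
  have htail : ∀ n x k, dist (F (k + n) x) (F (k + 1 + n) x) ≤ 2 * e n / 2 / 2 ^ k := by
    intro n x k
    calc dist (F (k + n) x) (F (k + 1 + n) x) ≤ e (n + k) := by
          rw [add_right_comm, add_comm k n]
          exact hF (n + k) x
      _ ≤ 2 * e n / 2 / 2 ^ k := by simpa using le_div_two_pow_of_le_half he n k
  choose f hf using fun x =>
    cauchySeq_tendsto_of_complete <|
      cauchySeq_of_le_geometric_two (C := 2 * e 0) fun k => by simpa using htail 0 x k
  have hdist : ∀ n x, dist (F n x) (f x) ≤ 2 * e n := fun n x => by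
    simpa using dist_le_of_le_geometric_two_of_tendsto₀ (f := fun k => F (k + n) x) (htail n x)
      ((hf x).comp (tendsto_add_atTop_nat n))
  refine ⟨f, ?_, hdist⟩
  refine (?_ : TendstoUniformly F f atTop).continuous (Frequently.of_forall hcont)
  rw [Metric.tendstoUniformly_iff]
  intro ε hε
  filter_upwards [((tendsto_zero_of_le_half he0 he).const_mul 2).eventually
    (gt_mem_nhds (by simpa using hε))] with n hn x
  rw [dist_comm]
  exact (hdist n x).trans_lt hn

end Halving

theorem Homeomorph.exists_tendsto_of_dist_succ_le_half {Y : Type*} [MetricSpace Y]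
    [CompactSpace Y] (F : ℕ → Y ≃ₜ Y) {e : ℕ → ℝ} (he0 : ∀ n, 0 ≤ e n)
    (he : ∀ n, e (n + 1) ≤ e n / 2) (hF : ∀ n x, dist (F n x) (F (n + 1) x) ≤ e n)
    (hsep : ∀ n x y, dist (F (n + 1) x) (F (n + 1) y) ≤ 4 * e (n + 1) → dist x y ≤ e n) :
    ∃ f : Y ≃ₜ Y, ∀ x, Tendsto (fun n => F n x) atTop (𝓝 (f x)) := by
  obtain ⟨f, hcont, hdist⟩ :=
    exists_continuous_dist_le_of_dist_succ_le_half (fun n => F n) (fun n => (F n).continuous)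
      he0 he hF
  have he_lim := tendsto_zero_of_le_half he0 he
  have hlim : ∀ x, Tendsto (fun n => F n x) atTop (𝓝 (f x)) := fun x =>
    tendsto_iff_dist_tendsto_zero.2 <| squeeze_zero (fun _ => dist_nonneg) (fun n => hdist n x)
      (by simpa using he_lim.const_mul 2)
  have hinj : Injective f := by
    intro x y hxy
    refine dist_le_zero.1 (ge_of_tendsto' he_lim fun n => hsep n x y ?_)
    calc dist (F (n + 1) x) (F (n + 1) y)
        ≤ dist (F (n + 1) x) (f x) + dist (F (n + 1) y) (f y) := by
          rw [hxy]; exact dist_triangle_right _ _ _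
      _ ≤ 2 * e (n + 1) + 2 * e (n + 1) := add_le_add (hdist _ x) (hdist _ y)
      _ = 4 * e (n + 1) := by ring
  have hsurj : Surjective f := by
    intro y
    have hy : Tendsto (fun n => f ((F n).symm y)) atTop (𝓝 y) :=
      tendsto_iff_dist_tendsto_zero.2 <| squeeze_zero (fun _ => dist_nonneg)
        (fun n => by simpa [dist_comm] using hdist n ((F n).symm y))
        (by simpa using he_lim.const_mul 2)
    rw [← mem_range, ← (isCompact_range hcont).isClosed.closure_eq]
    exact mem_closure_of_tendsto hy (Eventually.of_forall fun n => mem_range_self _)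
  exact ⟨hcont.homeoOfEquivCompactToT2 (f := Equiv.ofBijective f ⟨hinj, hsurj⟩), hlim⟩

/-- A stage of the back-and-forth construction; `tol` bounds how far the next stage may move
points. -/
structure PartialMatch {Y : Type*} [TopologicalSpace Y] (X A B : Set Y) where
  hom : Y ≃ₜ Y
  dom : Set Y
  tol : ℝ
  dom_finite : dom.Finite
  dom_subset : dom ⊆ A
  mapsTo : MapsTo hom dom B
  apply_of_notMem : ∀ z ∉ X, hom z = z
  tol_pos : 0 < tol

namespace PartialMatch

variable {Y : Type*} {X A B : Set Y}

theorem exists_next [MetricSpace Y] [CompactSpace Y] (hslh : StronglyLocallyHomogeneous X)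
    [LocallyCompactSpace X] (hX : IsOpen X) (hA : A ⊆ X) (hB : B ⊆ X) (hAd : Dense A)
    (hBd : Dense B) (s : PartialMatch X A B) {a b : Y} (ha : a ∈ A) (hb : b ∈ B) :
    ∃ t : PartialMatch X A B, s.dom ⊆ t.dom ∧ a ∈ t.dom ∧ b ∈ t.hom '' t.dom ∧
      EqOn t.hom s.hom s.dom ∧ (∀ x, dist (s.hom x) (t.hom x) ≤ s.tol) ∧ t.tol ≤ s.tol / 2 ∧
      ∀ x y, dist (t.hom x) (t.hom y) ≤ 4 * t.tol → dist x y ≤ s.tol := by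
  obtain ⟨F₁, hF₁B, hF₁s, hF₁X, hF₁d⟩ := hslh.exists_homeomorph_mapsTo_insert hX hBd
    s.apply_of_notMem s.dom_finite s.mapsTo (hA ha) (half_pos s.tol_pos)
  obtain ⟨F₂, ⟨x, hxA, hxb⟩, hF₂F₁, hF₂X, hF₂d⟩ := hslh.exists_homeomorph_mem_image hX hAd hF₁X
    (s.dom_finite.insert a) (insert_subset ha s.dom_subset) (hB hb) (half_pos s.tol_pos)
  obtain ⟨η, hη, hηsep⟩ := F₂.exists_pos_dist_lt_of_dist_apply_lt s.tol_pos
  have hF₂s : EqOn F₂ s.hom s.dom := fun y hy =>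
    (hF₂F₁ (mem_insert_of_mem a hy)).trans (hF₁s hy)
  refine ⟨{ hom := F₂
            dom := insert x (insert a s.dom)
            tol := min (s.tol / 2) (η / 8)
            dom_finite := (s.dom_finite.insert a).insert x
            dom_subset := insert_subset hxA (insert_subset ha s.dom_subset)
            mapsTo := fun y hy => ?_
            apply_of_notMem := hF₂X
            tol_pos := by have := s.tol_pos; positivity },
    (subset_insert _ _).trans (subset_insert _ _), mem_insert_of_mem _ (mem_insert _ _),
    ⟨x, mem_insert _ _, hxb⟩, hF₂s, fun y => ?_, min_le_left _ _, fun y z hyz => ?_⟩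
  · rcases hy with rfl | hy
    exacts [hxb ▸ hb, hF₂F₁ hy ▸ hF₁B hy]
  · calc dist (s.hom y) (F₂ y) ≤ dist (s.hom y) (F₁ y) + dist (F₁ y) (F₂ y) :=
          dist_triangle _ _ _
      _ ≤ s.tol / 2 + s.tol / 2 := add_le_add (hF₁d y) (hF₂d y)
      _ = s.tol := add_halves _
  · refine (hηsep y z (hyz.trans_lt ?_)).le
    have := min_le_right (s.tol / 2) (η / 8)
    linarith

theorem eqOn_of_le [TopologicalSpace Y] {u : ℕ → PartialMatch X A B}
    (hdom : ∀ n, (u n).dom ⊆ (u (n + 1)).dom)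
    (hagree : ∀ n, EqOn (u (n + 1)).hom (u n).hom (u n).dom) {m k : ℕ} (hmk : m ≤ k) :
    EqOn (u k).hom (u m).hom (u m).dom := by
  induction k, hmk using Nat.le_induction with
  | base => exact eqOn_refl _ _
  | succ k hmk ih =>
    exact fun x hx => (hagree k (monotone_nat_of_le_succ hdom hmk hx)).trans (ih hx)

end PartialMatch

theorem StronglyLocallyHomogeneous.exists_homeomorph_image_range_eq {Y : Type*} [MetricSpace Y]
    [CompactSpace Y] {X : Set Y} (hslh : StronglyLocallyHomogeneous X) [LocallyCompactSpace X]
    (hX : IsOpen X) {a b : ℕ → Y} (ha : range a ⊆ X) (hb : range b ⊆ X)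
    (had : Dense (range a)) (hbd : Dense (range b)) :
    ∃ f : Y ≃ₜ Y, f '' range a = range b ∧ ∀ z ∉ X, f z = z := by
  choose next hdom hnext_a hnext_b hagree hclose hhalf hsep using
    fun n (s : PartialMatch X (range a) (range b)) =>
      s.exists_next hslh hX ha hb had hbd (mem_range_self n) (mem_range_self n)
  let u : ℕ → PartialMatch X (range a) (range b) := fun n => Nat.rec
    { hom := Homeomorph.refl Y, dom := ∅, tol := 1, dom_finite := finite_empty,
      dom_subset := empty_subset _, mapsTo := mapsTo_empty _ _,
      apply_of_notMem := fun _ _ => rfl, tol_pos := one_pos } next n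
  obtain ⟨f, hf⟩ := Homeomorph.exists_tendsto_of_dist_succ_le_half (fun n => (u n).hom)
    (fun n => (u n).tol_pos.le) (fun n => hhalf n (u n)) (fun n => hclose n (u n))
    (fun n => hsep n (u n))
  have hfu : ∀ m, EqOn f (u m).hom (u m).dom := fun m x hx =>
    tendsto_nhds_unique (hf x) <| tendsto_atTop_of_eventually_const fun k hk =>
      PartialMatch.eqOn_of_le (fun n => hdom n (u n)) (fun n => hagree n (u n)) hk hx
  refine ⟨f, Subset.antisymm ?_ ?_, fun z hz => tendsto_nhds_unique (hf z) <|
    tendsto_atTop_of_eventually_const (i₀ := 0) fun k _ => (u k).apply_of_notMem z hz⟩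
  · rintro _ ⟨_, ⟨n, rfl⟩, rfl⟩
    rw [hfu (n + 1) (hnext_a n (u n))]
    exact (u (n + 1)).mapsTo (hnext_a n (u n))
  · rintro _ ⟨n, rfl⟩
    obtain ⟨x, hx, hxb⟩ := hnext_b n (u n)
    exact ⟨x, (u (n + 1)).dom_subset hx, (hfu (n + 1) hx).trans hxb⟩

theorem stmt2_general {Xb : Type*} [MetricSpace Xb] [CompactSpace Xb] (X : Set Xb)
    (hXopen : IsOpen X)
    (hlc : LocallyCompactSpace ↥X)
    (hslh : StronglyLocallyHomogeneous ↥X)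
    (A B : Set Xb) (hA : A ⊆ X) (hB : B ⊆ X)
    (hAc : A.Countable) (hBc : B.Countable) (hAd : Dense A) (hBd : Dense B) :
    ∃ f : Xb ≃ₜ Xb, f '' A = B ∧ ∀ z ∉ X, f z = z := by
  rcases isEmpty_or_nonempty Xb with _ | _
  · exact ⟨Homeomorph.refl Xb, by simp [eq_empty_of_isEmpty A, eq_empty_of_isEmpty B],
      fun _ _ => rfl⟩
  obtain ⟨a, rfl⟩ := hAc.exists_eq_range hAd.nonempty
  obtain ⟨b, rfl⟩ := hBc.exists_eq_range hBd.nonempty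
  exact hslh.exists_homeomorph_image_range_eq hXopen hA hB hAd hBd

/-- Bennett-type theorem for compactifications: countable dense subsets of a
metrizable locally compact strongly locally homogeneous space `X` can be matched by
a homeomorphism of a metric compactification `X̄` which is the identity on `X̄ − X`. -/
theorem stmt2 {Xb : Type*} [MetricSpace Xb] [CompactSpace Xb] (X : Set Xb)
    (hXopen : IsOpen X) (hXdense : Dense X)
    (hlc : LocallyCompactSpace ↥X)
    (hslh : StronglyLocallyHomogeneous ↥X)
    (A B : Set Xb) (hA : A ⊆ X) (hB : B ⊆ X)
    (hAc : A.Countable) (hBc : B.Countable) (hAd : Dense A) (hBd : Dense B) :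
    ∃ f : Xb ≃ₜ Xb, f '' A = B ∧ ∀ z ∉ X, f z = z :=
  stmt2_general X hXopen hlc hslh A B hA hB hAc hBc hAd hBd
end

section
/- Every metrizable, locally compact, strongly locally homogeneous space is countable dense homogeneous: for any two countable dense subsets A, B of X there is a homeomorphism f : X → X with f(A) = B. -/
/-!
Bennett's back-and-forth argument. Enumerate `A` and `B` and build homeomorphisms
`h₀ = id, h₁, …` together with growing finite sets `Fₙ ⊆ A` with `hₙ '' Fₙ ⊆ B`: at stage `n`
the next point of `A` is pushed into `B`, then the next point of `B` is pulled back into `A`, each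
time by composing with a homeomorphism supported in a small neighbourhood that avoids the points
already matched; strong local homogeneity and density provide it. Taking the supports small for
both `hₙ` and `hₙ⁻¹` makes both sequences uniformly Cauchy, so for a complete metric their limits
are mutually inverse homeomorphisms, and the limit agrees with `hₙ` on `Fₙ`. A complete metric
exists because a separable, locally compact, metrizable space is Polish.
-/

open Set Filter Topology Metric

theorem Topology.IsEmbedding.isOpen_range_of_denseRange {X Y : Type*} [TopologicalSpace X]
    [TopologicalSpace Y] [LocallyCompactSpace X] [T2Space Y] {e : X → Y} (he : IsEmbedding e)
    (hd : DenseRange e) : IsOpen (range e) := by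
  refine isOpen_iff_mem_nhds.2 ?_
  rintro _ ⟨x, rfl⟩
  obtain ⟨K, hK, hKx⟩ := exists_compact_mem_nhds x
  obtain ⟨U, hU, hUK⟩ := he.isOpen_iff.1 (isOpen_interior (s := K))
  have hxU : e x ∈ U := by
    rw [← mem_preimage, hUK]
    exact mem_interior_iff_mem_nhds.2 hKx
  have hUK' : U ∩ range e ⊆ e '' K := by
    rintro _ ⟨hy, y, rfl⟩
    exact mem_image_of_mem e (interior_subset (hUK ▸ hy : y ∈ interior K))
  refine mem_nhds_iff.2 ⟨U, ?_, hU, hxU⟩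
  calc U ⊆ closure (U ∩ range e) := hd.open_subset_closure_inter hU
    _ ⊆ e '' K := closure_minimal hUK' (hK.image he.continuous).isClosed
    _ ⊆ range e := image_subset_range e K

theorem polishSpace_of_locallyCompactSpace {X : Type*} [TopologicalSpace X]
    [TopologicalSpace.MetrizableSpace X] [LocallyCompactSpace X]
    [TopologicalSpace.SeparableSpace X] : PolishSpace X := by
  let := TopologicalSpace.metrizableSpaceMetric X
  have he := (UniformSpace.Completion.isUniformEmbedding_coe X).isEmbedding
  have hd := UniformSpace.Completion.denseRange_coe (α := X)
  have := hd.separableSpace (UniformSpace.Completion.continuous_coe X)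
  have := (he.isOpen_range_of_denseRange hd).polishSpace
  exact he.toHomeomorph.isClosedEmbedding.polishSpace

theorem exists_tendstoUniformly_of_dist_succ_le_of_summable {α Y : Type*} [PseudoMetricSpace Y]
    [CompleteSpace Y] {f : ℕ → α → Y} (d : ℕ → ℝ) (hd : Summable d)
    (hf : ∀ n x, dist (f n x) (f (n + 1) x) ≤ d n) : ∃ F, TendstoUniformly f F atTop := by
  choose F hF using fun x ↦ cauchySeq_tendsto_of_complete
    (cauchySeq_of_dist_le_of_summable d (hf · x) hd)
  refine ⟨F, tendstoUniformly_iff.2 fun ε hε ↦ ?_⟩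
  filter_upwards [(tendsto_sum_nat_add d).eventually (gt_mem_nhds hε)] with n hn x
  calc dist (F x) (f n x) = dist (f n x) (F x) := dist_comm _ _
    _ ≤ ∑' m, d (n + m) := dist_le_tsum_of_dist_le_of_tendsto d (hf · x) hd (hF x) n
    _ < ε := by simpa only [add_comm] using hn

theorem TendstoUniformly.exists_homeomorph {ι X Y : Type*} [UniformSpace X] [UniformSpace Y]
    [T2Space X] [T2Space Y] {p : Filter ι} [p.NeBot] {h : ι → X ≃ₜ Y} {F : X → Y} {G : Y → X}
    (hF : TendstoUniformly (fun n ↦ ⇑(h n)) F p)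
    (hG : TendstoUniformly (fun n ↦ ⇑(h n).symm) G p) : ∃ f : X ≃ₜ Y, ⇑f = F := by
  have hFc := hF.continuous (.of_forall fun n ↦ (h n).continuous)
  have hGc := hG.continuous (.of_forall fun n ↦ (h n).symm.continuous)
  have hGF (x : X) : G (F x) = x := by
    have := hG.tendsto_comp hGc.continuousAt (hF.tendsto_at x)
    simp only [Homeomorph.symm_apply_apply] at this
    exact tendsto_nhds_unique this tendsto_const_nhds
  have hFG (y : Y) : F (G y) = y := by
    have := hF.tendsto_comp hFc.continuousAt (hG.tendsto_at y)
    simp only [Homeomorph.apply_symm_apply] at this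
    exact tendsto_nhds_unique this tendsto_const_nhds
  exact ⟨⟨⟨F, G, hGF, hFG⟩, hFc, hGc⟩, rfl⟩

namespace Homeomorph

variable {X Y : Type*} [MetricSpace X] [MetricSpace Y]

def BiClose (ε : ℝ) (f g : X ≃ₜ Y) : Prop :=
  (∀ x, dist (f x) (g x) ≤ ε) ∧ ∀ y, dist (f.symm y) (g.symm y) ≤ ε

theorem BiClose.refl {ε : ℝ} (hε : 0 ≤ ε) (f : X ≃ₜ Y) : BiClose ε f f :=
  ⟨fun x ↦ by simpa using hε, fun y ↦ by simpa using hε⟩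

theorem BiClose.symm {ε : ℝ} {f g : X ≃ₜ Y} (h : BiClose ε f g) : BiClose ε f.symm g.symm :=
  ⟨h.2, by simpa only [symm_symm] using h.1⟩

theorem BiClose.trans {ε δ : ℝ} {f g k : X ≃ₜ Y} (hfg : BiClose ε f g) (hgk : BiClose δ g k) :
    BiClose (ε + δ) f k :=
  ⟨fun x ↦ (dist_triangle _ _ _).trans (add_le_add (hfg.1 x) (hgk.1 x)),
    fun y ↦ (dist_triangle _ _ _).trans (add_le_add (hfg.2 y) (hgk.2 y))⟩

theorem exists_tendsto_of_biClose [CompleteSpace X] [CompleteSpace Y] {h : ℕ → X ≃ₜ Y}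
    (d : ℕ → ℝ) (hd : Summable d) (hh : ∀ n, BiClose (d n) (h n) (h (n + 1))) :
    ∃ f : X ≃ₜ Y, ∀ x, Tendsto (fun n ↦ h n x) atTop (𝓝 (f x)) := by
  obtain ⟨F, hF⟩ := exists_tendstoUniformly_of_dist_succ_le_of_summable d hd fun n ↦ (hh n).1
  obtain ⟨G, hG⟩ := exists_tendstoUniformly_of_dist_succ_le_of_summable d hd fun n ↦ (hh n).2
  obtain ⟨f, rfl⟩ := hF.exists_homeomorph hG
  exact ⟨f, hF.tendsto_at⟩

end Homeomorph

section SupportedHomeomorph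

variable {X : Type*}

theorem Function.Injective.mapsTo_of_forall_notMem_eq {g : X → X} (hg : g.Injective) {U : Set X}
    (hfix : ∀ z ∉ U, g z = z) : MapsTo g U U := fun x hx ↦ by
  by_contra hgx
  exact hgx (by rwa [hg (hfix _ hgx)])

theorem Homeomorph.symm_apply_eq_self_of_notMem [TopologicalSpace X] {g : X ≃ₜ X} {U : Set X}
    (hfix : ∀ z ∉ U, g z = z) : ∀ z ∉ U, g.symm z = z :=
  fun z hz ↦ g.symm_apply_eq.2 (hfix z hz).symm

theorem dist_apply_le_of_forall_notMem_eq {Y : Type*} [PseudoMetricSpace Y] {g : X → X}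
    (hg : g.Injective) {U : Set X} (hfix : ∀ z ∉ U, g z = z) {u : X → Y} {p : X} {ε : ℝ}
    (hε : 0 ≤ ε) (hU : ∀ x ∈ U, dist (u x) (u p) ≤ ε / 2) (x : X) :
    dist (u x) (u (g x)) ≤ ε := by
  by_cases hx : x ∈ U
  · calc dist (u x) (u (g x)) ≤ dist (u x) (u p) + dist (u (g x)) (u p) := dist_triangle_right ..
      _ ≤ ε / 2 + ε / 2 := add_le_add (hU x hx) (hU _ (hg.mapsTo_of_forall_notMem_eq hfix hx))
      _ = ε := add_halves ε
  · rwa [hfix x hx, dist_self]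

theorem StronglyLocallyHomogeneous.exists_homeomorph_apply_mem_s3 [TopologicalSpace X]
    (hX : StronglyLocallyHomogeneous X) {D : Set X} (hD : Dense D) {p : X} {U : Set X}
    (hU : U ∈ 𝓝 p) : ∃ g : X ≃ₜ X, g p ∈ D ∧ ∀ z ∉ U, g z = z := by
  obtain ⟨V, hV, hpV, -, hmove⟩ := hX p U hU
  obtain ⟨q, hqD, hqV⟩ := hD.exists_mem_open hV ⟨p, hpV⟩
  obtain ⟨g, rfl, hfix⟩ := hmove q hqV
  exact ⟨g, hqD, hfix⟩

end SupportedHomeomorph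

structure PartialMatch_s3 {X : Type*} [TopologicalSpace X] (A B : Set X) where
  homeo : X ≃ₜ X
  dom : Set X
  finite_dom : dom.Finite
  dom_subset : dom ⊆ A
  image_dom_subset : homeo '' dom ⊆ B

namespace PartialMatch_s3

variable {X : Type*} [TopologicalSpace X] {A B : Set X}

instance : Inhabited (PartialMatch_s3 A B) :=
  ⟨⟨.refl X, ∅, finite_empty, empty_subset A, by simp⟩⟩

instance : Preorder (PartialMatch_s3 A B) where
  le s t := s.dom ⊆ t.dom ∧ EqOn t.homeo s.homeo s.dom
  le_refl s := ⟨subset_rfl, eqOn_refl _ _⟩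
  le_trans _ _ _ hst htu := ⟨hst.1.trans htu.1, fun _ hx ↦ (htu.2 (hst.1 hx)).trans (hst.2 hx)⟩

def symm (s : PartialMatch_s3 A B) : PartialMatch_s3 B A where
  homeo := s.homeo.symm
  dom := s.homeo '' s.dom
  finite_dom := s.finite_dom.image _
  dom_subset := s.image_dom_subset
  image_dom_subset := by simpa [image_image] using s.dom_subset

theorem le_symm_of_symm_le {s : PartialMatch_s3 A B} {t : PartialMatch_s3 B A} (h : s.symm ≤ t) :
    s ≤ t.symm := by
  have hts : ∀ x ∈ s.dom, t.homeo (s.homeo x) = x := fun x hx ↦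
    (h.2 (mem_image_of_mem _ hx)).trans (s.homeo.symm_apply_apply x)
  exact ⟨fun x hx ↦ ⟨s.homeo x, h.1 (mem_image_of_mem _ hx), hts x hx⟩,
    fun x hx ↦ t.homeo.symm_apply_eq.2 (hts x hx).symm⟩

theorem apply_eq_of_tendsto [T2Space X] {S : ℕ → PartialMatch_s3 A B} (hS : Monotone S) {f : X → X}
    (hf : ∀ x, Tendsto (fun n ↦ (S n).homeo x) atTop (𝓝 (f x))) {n : ℕ} {x : X}
    (hx : x ∈ (S n).dom) : f x = (S n).homeo x :=
  tendsto_nhds_unique (hf x) (tendsto_atTop_of_eventually_const fun _ hm ↦ (hS hm).2 hx)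

end PartialMatch_s3

namespace PartialMatch_s3

open Homeomorph

variable {X : Type*} [MetricSpace X] {A B : Set X}

theorem exists_le_mem_dom (hX : StronglyLocallyHomogeneous X) (hB : Dense B)
    (s : PartialMatch_s3 A B) {a : X} (ha : a ∈ A) {ε : ℝ} (hε : 0 < ε) :
    ∃ t : PartialMatch_s3 A B, s ≤ t ∧ a ∈ t.dom ∧ BiClose ε s.homeo t.homeo := by
  by_cases has : a ∈ s.dom
  · exact ⟨s, le_rfl, has, .refl hε.le _⟩
  set h := s.homeo
  have hT : h a ∉ h '' s.dom := fun ⟨_, hx, hxa⟩ ↦ has (h.injective hxa ▸ hx)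
  -- Supporting `g` in `U` keeps the old matches and makes `h.trans g` and its inverse `ε`-close
  -- to `h` and `h.symm`.
  set U := ball (h a) (ε / 2) ∩ h.symm ⁻¹' ball (h.symm (h a)) (ε / 2) ∩ (h '' s.dom)ᶜ
  have hU : U ∈ 𝓝 (h a) := inter_mem (inter_mem (ball_mem_nhds _ (half_pos hε))
    (h.symm.continuous.continuousAt.preimage_mem_nhds (ball_mem_nhds _ (half_pos hε))))
    ((s.finite_dom.image h).isClosed.isOpen_compl.mem_nhds hT)
  obtain ⟨g, hgB, hfix⟩ := hX.exists_homeomorph_apply_mem_s3 hB hU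
  have hfix_dom : ∀ x ∈ s.dom, g (h x) = h x := fun x hx ↦ hfix _ fun hxU ↦ hxU.2 ⟨x, hx, rfl⟩
  refine ⟨⟨h.trans g, insert a s.dom, s.finite_dom.insert a, insert_subset ha s.dom_subset, ?_⟩,
    ⟨subset_insert _ _, hfix_dom⟩, mem_insert _ _, fun x ↦ ?_, fun x ↦ ?_⟩
  · rintro _ ⟨x, rfl | hx, rfl⟩
    · exact hgB
    · simpa only [trans_apply, hfix_dom x hx] using s.image_dom_subset (mem_image_of_mem _ hx)
  · exact dist_apply_le_of_forall_notMem_eq (u := id) g.injective hfix hε.le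
      (fun y hy ↦ (mem_ball.1 hy.1.1).le) (h x)
  · exact dist_apply_le_of_forall_notMem_eq g.symm.injective (symm_apply_eq_self_of_notMem hfix)
      hε.le (fun y hy ↦ (mem_ball.1 hy.1.2).le) x

theorem exists_le_mem_image_dom (hX : StronglyLocallyHomogeneous X) (hA : Dense A)
    (s : PartialMatch_s3 A B) {b : X} (hb : b ∈ B) {ε : ℝ} (hε : 0 < ε) :
    ∃ t : PartialMatch_s3 A B, s ≤ t ∧ b ∈ t.homeo '' t.dom ∧ BiClose ε s.homeo t.homeo := by
  obtain ⟨t, hst, hbt, hclose⟩ := s.symm.exists_le_mem_dom hX hA hb hε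
  exact ⟨t.symm, le_symm_of_symm_le hst,
    ⟨t.homeo b, mem_image_of_mem _ hbt, t.homeo.symm_apply_apply b⟩, hclose.symm⟩

theorem exists_le_mem_dom_mem_image_dom (hX : StronglyLocallyHomogeneous X) (hA : Dense A)
    (hB : Dense B) (s : PartialMatch_s3 A B) {a b : X} (ha : a ∈ A) (hb : b ∈ B) {ε : ℝ}
    (hε : 0 < ε) : ∃ t : PartialMatch_s3 A B,
      s ≤ t ∧ a ∈ t.dom ∧ b ∈ t.homeo '' t.dom ∧ BiClose ε s.homeo t.homeo := by
  obtain ⟨t₁, hst₁, hat₁, hclose₁⟩ := s.exists_le_mem_dom hX hB ha (half_pos hε)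
  obtain ⟨t₂, ht₁₂, hbt₂, hclose₂⟩ := t₁.exists_le_mem_image_dom hX hA hb (half_pos hε)
  exact ⟨t₂, hst₁.trans ht₁₂, ht₁₂.1 hat₁, hbt₂, add_halves ε ▸ hclose₁.trans hclose₂⟩

end PartialMatch_s3

open PartialMatch_s3 in
theorem StronglyLocallyHomogeneous.exists_homeomorph_image_eq {X : Type*} [MetricSpace X]
    [CompleteSpace X] (hX : StronglyLocallyHomogeneous X) {A B : Set X} (hAc : A.Countable)
    (hBc : B.Countable) (hAd : Dense A) (hBd : Dense B) : ∃ f : X ≃ₜ X, f '' A = B := by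
  rcases isEmpty_or_nonempty X with _ | _
  · exact ⟨.refl X, by simp [eq_empty_of_isEmpty]⟩
  obtain ⟨eA, rfl⟩ := hAc.exists_eq_range hAd.nonempty
  obtain ⟨eB, rfl⟩ := hBc.exists_eq_range hBd.nonempty
  choose step hle hmemA hmemB hclose using fun n (s : PartialMatch_s3 (range eA) (range eB)) ↦
    s.exists_le_mem_dom_mem_image_dom hX hAd hBd (mem_range_self n) (mem_range_self n)
      (pow_pos one_half_pos n)
  let S : ℕ → PartialMatch_s3 (range eA) (range eB) := fun n ↦ Nat.rec default step n
  have hS : Monotone S := monotone_nat_of_le_succ fun n ↦ hle n (S n)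
  obtain ⟨f, hf⟩ := Homeomorph.exists_tendsto_of_biClose _ summable_geometric_two
    fun n ↦ hclose n (S n)
  refine ⟨f, subset_antisymm ?_ ?_⟩
  · rintro _ ⟨_, ⟨n, rfl⟩, rfl⟩
    rw [apply_eq_of_tendsto (n := n + 1) hS hf (hmemA n (S n))]
    exact (S (n + 1)).image_dom_subset (mem_image_of_mem _ (hmemA n (S n)))
  · rintro _ ⟨n, rfl⟩
    obtain ⟨a, ha, hab⟩ := hmemB n (S n)
    exact ⟨a, (S (n + 1)).dom_subset ha, (apply_eq_of_tendsto (n := n + 1) hS hf ha).trans hab⟩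

/-- Bennett's theorem: a metrizable locally compact strongly locally homogeneous
space is countable dense homogeneous. -/
theorem stmt3 {X : Type*} [TopologicalSpace X] [TopologicalSpace.MetrizableSpace X]
    [LocallyCompactSpace X] (hslh : StronglyLocallyHomogeneous X)
    (A B : Set X) (hAc : A.Countable) (hBc : B.Countable)
    (hAd : Dense A) (hBd : Dense B) :
    ∃ f : X ≃ₜ X, f '' A = B := by
  have : TopologicalSpace.SeparableSpace X := ⟨⟨A, hAc, hAd⟩⟩
  have : PolishSpace X := polishSpace_of_locallyCompactSpace
  let := TopologicalSpace.upgradeIsCompletelyMetrizable X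
  exact hslh.exists_homeomorph_image_eq hAc hBc hAd hBd
end

section
/- Let X be a metrizable, locally compact, strongly locally homogeneous space with a metric compactification X̄. If A ⊆ X is countable and dense in X and B ⊆ X has empty interior, then there exists a homeomorphism f : X̄ → X̄ with f(B) ∩ A = ∅ and f equal to the identity on X̄ − X. -/
/-!
Enumerate `A = {u₀, u₁, …}` and build homeomorphisms `gₙ` of `X̄`, each the identity off `X`,
with `gₙ uᵢ ∉ B` for `i < n`. If `gₙ uₙ ∈ B`, strong local homogeneity and the empty interior of
`B` give a homeomorphism of `X` supported in a small compact neighbourhood of `gₙ uₙ` that avoids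
the finitely many points `gₙ uᵢ` and pushes `gₙ uₙ` off `B`; having compact support, it extends by
the identity to `X̄`. Composing with it, `gₙ₊₁` agrees with `gₙ` at `u₀, …, uₙ₋₁` and is
`2⁻ⁿ`-close to `gₙ`, and so is its inverse by uniform continuity of `gₙ⁻¹`. Both sequences then
converge uniformly, their limits are mutually inverse homeomorphisms `G` and `G⁻¹`,
`G uᵢ = gᵢ₊₁ uᵢ ∉ B`, and `f = G⁻¹` works.
-/

open Set Metric Filter Topology

namespace Equiv.Perm

variable {Y : Type*}

lemma apply_mem_of_forall_notMem {e : Perm Y} {U : Set Y} (he : ∀ z ∉ U, e z = z) {z : Y}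
    (hz : z ∈ U) : e z ∈ U := by
  by_contra h
  have hfix : e z = z := e.injective.isFixedPt_apply_iff.1 (he _ h)
  exact h (by rwa [hfix])

lemma dist_apply_lt_of_forall_notMem_ball [PseudoMetricSpace Y] {e : Perm Y} {x : Y} {r : ℝ}
    (hr : 0 < r) (he : ∀ z ∉ ball x r, e z = z) (z : Y) : dist (e z) z < 2 * r := by
  by_cases hz : z ∈ ball x r
  · calc dist (e z) z ≤ dist (e z) x + dist z x := dist_triangle_right _ _ _
      _ < r + r := add_lt_add (apply_mem_of_forall_notMem he hz) hz
      _ = 2 * r := by ring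
  · rw [he z hz, dist_self]
    positivity

end Equiv.Perm

section Extension

variable {Y : Type*} [TopologicalSpace Y] {X : Set Y}

open scoped Classical in
lemma continuous_extendDomain_of_isCompact [T2Space Y] (hX : IsOpen X) {e : Equiv.Perm X}
    (he : Continuous e) {K : Set X} (hK : IsCompact K) (heK : ∀ z ∉ K, e z = z) :
    Continuous (e.extendDomain (Equiv.refl X)) := by
  set Φ := e.extendDomain (Equiv.refl X)
  have hΦX : ContinuousOn Φ X := by
    rw [continuousOn_iff_continuous_domRestrict]
    convert continuous_subtype_val.comp he using 1
    ext z
    exact e.extendDomain_apply_subtype (Equiv.refl X) z.2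
  have hΦK : ContinuousOn Φ (Subtype.val '' K)ᶜ := by
    refine continuousOn_id.congr fun y hy => ?_
    by_cases hyX : y ∈ X
    · have : (⟨y, hyX⟩ : X) ∉ K := fun h => hy ⟨_, h, rfl⟩
      simp only [Φ, e.extendDomain_apply_subtype _ hyX, Equiv.refl_symm, Equiv.refl_apply,
        heK _ this, id]
    · exact e.extendDomain_apply_not_subtype _ hyX
  have hcover : X ∪ (Subtype.val '' K)ᶜ = univ := by
    refine eq_univ_of_forall fun y => ?_
    by_cases hyX : y ∈ X
    · exact Or.inl hyX
    · exact Or.inr fun ⟨z, _, hz⟩ => hyX (hz ▸ z.2)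
  rw [← continuousOn_univ, ← hcover]
  exact hΦX.union_of_isOpen hΦK hX (hK.image continuous_subtype_val).isClosed.isOpen_compl

lemma exists_homeomorph_extend_of_isCompact [T2Space Y] (hX : IsOpen X) (f : X ≃ₜ X)
    {K : Set X} (hK : IsCompact K) (hfK : ∀ z ∉ K, f z = z) :
    ∃ Φ : Y ≃ₜ Y, (∀ z : X, Φ z = f z) ∧ ∀ y ∉ X, Φ y = y := by
  classical
  have hfK' : ∀ z ∉ K, f.symm z = z := fun z hz => f.symm_apply_eq.2 (hfK z hz).symm
  refine ⟨⟨Equiv.Perm.extendDomain f.toEquiv (Equiv.refl X),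
    continuous_extendDomain_of_isCompact hX f.continuous hK hfK,
    continuous_extendDomain_of_isCompact hX f.symm.continuous hK hfK'⟩,
    fun z => Equiv.Perm.extendDomain_apply_subtype f.toEquiv _ z.2,
    fun y hy => Equiv.Perm.extendDomain_apply_not_subtype f.toEquiv _ hy⟩

end Extension

lemma StronglyLocallyHomogeneous.exists_homeomorph_apply_notMem {X : Type*} [TopologicalSpace X]
    [LocallyCompactSpace X] (hX : StronglyLocallyHomogeneous X) {B : Set X}
    (hB : interior B = ∅) {x : X} {U : Set X} (hU : U ∈ 𝓝 x) :
    ∃ f : X ≃ₜ X, f x ∉ B ∧ ∃ K ⊆ U, IsCompact K ∧ ∀ z ∉ K, f z = z := by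
  obtain ⟨K, hKx, hKU, hK⟩ := local_compact_nhds hU
  obtain ⟨V, hV, hxV, -, hmove⟩ := hX x K hKx
  obtain ⟨y, hyV, hyB⟩ : ∃ y ∈ V, y ∉ B := by
    by_contra! h
    have : V ⊆ interior B := hV.subset_interior_iff.2 h
    simpa [hB] using this hxV
  obtain ⟨f, rfl, hfK⟩ := hmove y hyV
  exact ⟨f, hyB, K, hKU, hK, hfK⟩

lemma exists_homeomorph_apply_notMem_of_isOpen {Y : Type*} [TopologicalSpace Y] [T2Space Y]
    {X : Set Y} (hX : IsOpen X) [LocallyCompactSpace X] (hXh : StronglyLocallyHomogeneous X)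
    {B : Set Y} (hB : interior (Subtype.val ⁻¹' B : Set X) = ∅) {x : Y} (hx : x ∈ X)
    {W : Set Y} (hW : W ∈ 𝓝 x) :
    ∃ Φ : Y ≃ₜ Y, Φ x ∉ B ∧ ∀ z ∉ X ∩ W, Φ z = z := by
  have hW' : Subtype.val ⁻¹' W ∈ 𝓝 (⟨x, hx⟩ : X) :=
    continuousAt_subtype_val.preimage_mem_nhds hW
  obtain ⟨f, hfx, K, hKW, hK, hfK⟩ := hXh.exists_homeomorph_apply_notMem hB hW'
  obtain ⟨Φ, hΦf, hΦX⟩ := exists_homeomorph_extend_of_isCompact hX f hK hfK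
  refine ⟨Φ, fun h => hfx (by rwa [mem_preimage, ← hΦf]), fun z hz => ?_⟩
  by_cases hzX : z ∈ X
  · have hzK : (⟨z, hzX⟩ : X) ∉ K := fun h => hz ⟨hzX, hKW h⟩
    rw [hΦf ⟨z, hzX⟩, hfK _ hzK]
  · exact hΦX z hzX

lemma ContinuousMap.exists_tendstoUniformly_of_summable {Y Z : Type*} [TopologicalSpace Y]
    [CompactSpace Y] [Nonempty Y] [MetricSpace Z] [CompleteSpace Z] (h : ℕ → C(Y, Z))
    {d : ℕ → ℝ} (hd : Summable d) (hh : ∀ n z, dist (h (n + 1) z) (h n z) ≤ d n) :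
    ∃ H : C(Y, Z), TendstoUniformly (fun n => ⇑(h n)) H atTop := by
  have hd' : ∀ n, dist (h n) (h (n + 1)) ≤ d n := fun n =>
    ContinuousMap.dist_le_iff_of_nonempty.2 fun z => dist_comm (h n z) _ ▸ hh n z
  obtain ⟨H, hH⟩ := cauchySeq_tendsto_of_complete (cauchySeq_of_dist_le_of_summable d hd' hd)
  exact ⟨H, ContinuousMap.tendsto_iff_tendstoUniformly.1 hH⟩

namespace Homeomorph

variable {Y : Type*} [MetricSpace Y] [CompactSpace Y]

lemma exists_pos_forall_dist_trans_lt (g : Y ≃ₜ Y) {δ : ℝ} (hδ : 0 < δ) :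
    ∃ η > 0, ∀ Φ : Y ≃ₜ Y, (∀ z, dist (Φ z) z < η) →
      ∀ z, dist ((g.trans Φ) z) (g z) < δ ∧ dist ((g.trans Φ).symm z) (g.symm z) < δ := by
  obtain ⟨η, hη, hgη⟩ := Metric.uniformContinuous_iff.1
    (CompactSpace.uniformContinuous_of_continuous g.symm.continuous) δ hδ
  refine ⟨min δ η, lt_min hδ hη, fun Φ hΦ z => ⟨(hΦ (g z)).trans_le (min_le_left _ _), hgη ?_⟩⟩
  have : dist (Φ.symm z) z < min δ η := by simpa [dist_comm] using hΦ (Φ.symm z)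
  exact this.trans_le (min_le_right _ _)

lemma exists_tendsto_of_summable (g : ℕ → Y ≃ₜ Y) {d : ℕ → ℝ} (hd : Summable d)
    (hg : ∀ n z, dist (g (n + 1) z) (g n z) ≤ d n)
    (hg' : ∀ n z, dist ((g (n + 1)).symm z) ((g n).symm z) ≤ d n) :
    ∃ G : Y ≃ₜ Y, ∀ z, Tendsto (fun n => g n z) atTop (𝓝 (G z)) := by
  cases isEmpty_or_nonempty Y
  · exact ⟨Homeomorph.refl Y, isEmptyElim⟩
  obtain ⟨F, hF⟩ := ContinuousMap.exists_tendstoUniformly_of_summable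
    (fun n => (g n : C(Y, Y))) hd hg
  obtain ⟨H, hH⟩ := ContinuousMap.exists_tendstoUniformly_of_summable
    (fun n => ((g n).symm : C(Y, Y))) hd hg'
  have hFH : ∀ z, F (H z) = z := fun z => tendsto_nhds_unique
    (hF.tendsto_comp F.continuous.continuousAt (hH.tendsto_at z))
    (by simp)
  have hHF : ∀ z, H (F z) = z := fun z => tendsto_nhds_unique
    (hH.tendsto_comp H.continuous.continuousAt (hF.tendsto_at z))
    (by simp)
  exact ⟨⟨⟨F, H, hHF, hFH⟩, F.continuous, H.continuous⟩, hF.tendsto_at⟩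

end Homeomorph

section Construction

variable {Y : Type*} [MetricSpace Y] [CompactSpace Y] {X : Set Y} (hX : IsOpen X)
  [LocallyCompactSpace X] (hXh : StronglyLocallyHomogeneous X) {B : Set Y} (hB : B ⊆ X)
  (hBint : interior (Subtype.val ⁻¹' B : Set X) = ∅)
include hX hXh hB hBint

lemma exists_close_homeomorph_apply_notMem (g : Y ≃ₜ Y) (hgX : ∀ z ∉ X, g z = z) {P : Set Y}
    (hP : P.Finite) (hPB : ∀ p ∈ P, g p ∉ B) (a : Y) {δ : ℝ} (hδ : 0 < δ) :
    ∃ g' : Y ≃ₜ Y, (∀ z ∉ X, g' z = z) ∧ EqOn g' g P ∧ g' a ∉ B ∧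
      ∀ z, dist (g' z) (g z) < δ ∧ dist (g'.symm z) (g.symm z) < δ := by
  by_cases ha : g a ∈ B
  case neg => exact ⟨g, hgX, eqOn_refl _ _, ha, by simp [hδ]⟩
  obtain ⟨η, hη, hgη⟩ := g.exists_pos_forall_dist_trans_lt hδ
  have haP : g a ∉ g '' P := by
    rintro ⟨p, hp, hpa⟩
    exact hPB p hp (hpa ▸ ha)
  have hW : ball (g a) (η / 2) ∩ (g '' P)ᶜ ∈ 𝓝 (g a) :=
    inter_mem (ball_mem_nhds _ (half_pos hη)) ((hP.image g).isClosed.compl_mem_nhds haP)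
  obtain ⟨Φ, hΦa, hΦ⟩ := exists_homeomorph_apply_notMem_of_isOpen hX hXh hBint (hB ha) hW
  refine ⟨g.trans Φ, fun z hz => ?_, fun p hp => hΦ _ fun h => h.2.2 ⟨p, hp, rfl⟩, hΦa,
    hgη Φ fun z => ?_⟩
  · simp only [Homeomorph.trans_apply, hgX z hz, hΦ z fun h => hz h.1]
  · have := Equiv.Perm.dist_apply_lt_of_forall_notMem_ball (e := Φ.toEquiv) (half_pos hη)
      (fun z hz => hΦ z fun h => hz h.2.1) z
    rwa [mul_div_cancel₀ η two_ne_zero] at this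

lemma exists_homeomorph_forall_apply_notMem (u : ℕ → Y) :
    ∃ G : Y ≃ₜ Y, (∀ i, G (u i) ∉ B) ∧ ∀ z ∉ X, G z = z := by
  let T (n : ℕ) := {g : Y ≃ₜ Y // (∀ z ∉ X, g z = z) ∧ ∀ i < n, g (u i) ∉ B}
  have step : ∀ n (g : T n), ∃ g' : T (n + 1), EqOn g'.1 g.1 (u '' Iio n) ∧
      ∀ z, dist (g'.1 z) (g.1 z) < (1 / 2) ^ n ∧
        dist (g'.1.symm z) (g.1.symm z) < (1 / 2) ^ n := by
    rintro n ⟨g, hgX, hgB⟩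
    obtain ⟨g', hg'X, hg'g, hg'B, hg'd⟩ := exists_close_homeomorph_apply_notMem hX hXh hB hBint
      g hgX ((finite_Iio n).image u) (by rintro _ ⟨i, hi, rfl⟩; exact hgB i hi) (u n)
      (δ := (1 / 2) ^ n) (by positivity)
    refine ⟨⟨g', hg'X, fun i hi => ?_⟩, hg'g, hg'd⟩
    rcases Nat.lt_succ_iff_lt_or_eq.1 hi with hi | rfl
    · rw [hg'g ⟨i, hi, rfl⟩]
      exact hgB i hi
    · exact hg'B
  choose next hnext using step
  let g (n : ℕ) : T n :=
    Nat.rec ⟨Homeomorph.refl Y, fun _ _ => rfl, fun _ hi => absurd hi (Nat.not_lt_zero _)⟩ next n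
  obtain ⟨G, hG⟩ := Homeomorph.exists_tendsto_of_summable (fun n => (g n).1) summable_geometric_two
    (fun n z => ((hnext n (g n)).2 z).1.le) (fun n z => ((hnext n (g n)).2 z).2.le)
  have hstable (i : ℕ) : ∀ m ≥ i + 1, (g m).1 (u i) = (g (i + 1)).1 (u i) :=
    Nat.le_induction rfl fun m hm ih => ((hnext m (g m)).1 ⟨i, hm, rfl⟩).trans ih
  refine ⟨G, fun i => ?_, fun z hz => ?_⟩
  · have : G (u i) = (g (i + 1)).1 (u i) := tendsto_nhds_unique (hG (u i))
      (tendsto_const_nhds.congr' (eventually_atTop.2 ⟨i + 1, fun m hm => (hstable i m hm).symm⟩))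
    rw [this]
    exact (g (i + 1)).2.2 i (Nat.lt_succ_self i)
  · exact tendsto_nhds_unique (hG z) (by simp only [(g _).2.1 z hz, tendsto_const_nhds])

end Construction

theorem stmt4_general {Xb : Type*} [MetricSpace Xb] [CompactSpace Xb] (X : Set Xb)
    (hXopen : IsOpen X)
    (hlc : LocallyCompactSpace ↥X)
    (hslh : StronglyLocallyHomogeneous ↥X)
    (A B : Set Xb) (hB : B ⊆ X)
    (hAc : A.Countable)
    (hBint : interior (Subtype.val ⁻¹' B : Set ↥X) = ∅) :
    ∃ f : Xb ≃ₜ Xb, f '' B ∩ A = ∅ ∧ ∀ z ∉ X, f z = z := by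
  rcases A.eq_empty_or_nonempty with rfl | hA
  · exact ⟨Homeomorph.refl Xb, inter_empty _, fun _ _ => rfl⟩
  obtain ⟨u, rfl⟩ := hAc.exists_eq_range hA
  obtain ⟨G, hGu, hGX⟩ := exists_homeomorph_forall_apply_notMem hXopen hslh hB hBint u
  refine ⟨G.symm, eq_empty_iff_forall_notMem.2 ?_, fun z hz => G.symm_apply_eq.2 (hGX z hz).symm⟩
  rintro _ ⟨⟨b, hb, rfl⟩, i, hi⟩
  exact hGu i (by rwa [hi, G.apply_symm_apply])

/-- A set `B ⊆ X` with empty interior (in `X`) can be moved off a countable dense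
set `A ⊆ X` by a homeomorphism of a metric compactification `X̄` fixing `X̄ − X`. -/
theorem stmt4 {Xb : Type*} [MetricSpace Xb] [CompactSpace Xb] (X : Set Xb)
    (hXopen : IsOpen X) (hXdense : Dense X)
    (hlc : LocallyCompactSpace ↥X)
    (hslh : StronglyLocallyHomogeneous ↥X)
    (A B : Set Xb) (hA : A ⊆ X) (hB : B ⊆ X)
    (hAc : A.Countable) (hAd : Dense A)
    (hBint : interior (Subtype.val ⁻¹' B : Set ↥X) = ∅) :
    ∃ f : Xb ≃ₜ Xb, f '' B ∩ A = ∅ ∧ ∀ z ∉ X, f z = z :=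
  stmt4_general X hXopen hlc hslh A B hB hAc hBint
end

section
/- Let X be a compact Hausdorff space with its unique compatible uniform structure 𝔘, and let ∼ be an equivalence relation on X with closed classes such that for every entourage u ∈ 𝔘 only finitely many equivalence classes fail to be u-small. Then the quotient space X/∼ is Hausdorff. -/
/-!
If `x ≁ y`, pick a symmetric entourage `v` with `(x, y) ∉ v ○ v ○ v`. A related pair `(a, b)`
with `a` `v`-close to `x` and `b` `v`-close to `y` cannot lie in a `v`-small class, so it lies
in `c ×ˢ c` for one of the finitely many classes `c` that are not `v`-small; these squares form
a closed set missing `(x, y)`. Hence the graph of `∼` is closed in `X × X`. On a compact space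
this makes the quotient map proper, so its square is a closed map sending the graph onto the
diagonal of `X/∼`, which is therefore closed.
-/

open Set

namespace Setoid

variable {X : Type*}

theorem isClosed_setOf_rel_of_finite_not_small [UniformSpace X] (s : Setoid X)
    (hcl : ∀ x : X, IsClosed {y | s.r y x})
    (hfin : ∀ u ∈ uniformity X,
      {c : Set X | (∃ x, c = {y | s.r x y}) ∧ ¬ c ×ˢ c ⊆ u}.Finite) :
    IsClosed {p : X × X | s.r p.1 p.2} := by
  have hclass : ∀ x : X, IsClosed {y | s.r x y} := fun x => by
    simpa only [s.comm'] using hcl x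
  refine isClosed_iff_nhds.mpr fun ⟨x, y⟩ hcluster => by_contra fun hxy => ?_
  -- a closed class containing `y` also contains every point inseparable from `y`
  obtain ⟨u, hu, hxyu⟩ : ∃ u ∈ uniformity X, (x, y) ∉ u := by
    have : ¬ Inseparable x y := fun h => hxy ((h.mem_closed_iff (hcl y)).mpr (s.refl y))
    simpa [inseparable_iff_ker_uniformity, Filter.mem_ker] using this
  obtain ⟨v, hv, hvsymm, hvu⟩ := comp_comp_symm_mem_uniformity_sets hu
  set big := {c : Set X | (∃ x, c = {y | s.r x y}) ∧ ¬ c ×ˢ c ⊆ v}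
  have hbig : IsClosed (⋃ c ∈ big, c ×ˢ c) := (hfin v hv).isClosed_biUnion <| by
    rintro c ⟨⟨z, rfl⟩, -⟩
    exact (hclass z).prod (hclass z)
  have hxy_big : (x, y) ∉ ⋃ c ∈ big, c ×ˢ c := by
    simp only [mem_iUnion]
    rintro ⟨c, ⟨⟨z, rfl⟩, -⟩, hx, hy⟩
    exact hxy (s.trans (s.symm hx) hy)
  obtain ⟨⟨a, b⟩, ⟨⟨hxa, hby⟩, hab_big⟩, hab⟩ := hcluster _ <| Filter.inter_mem
    (prod_mem_nhds (UniformSpace.ball_mem_nhds x hv) (UniformSpace.ball_mem_nhds y hv))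
    (hbig.isOpen_compl.mem_nhds hxy_big)
  have hab_v : (a, b) ∈ v := by
    have hmem : (a, b) ∈ {z | s.r a z} ×ˢ {z | s.r a z} := ⟨s.refl a, hab⟩
    by_contra h
    exact hab_big (mem_biUnion ⟨⟨a, rfl⟩, fun hsmall => h (hsmall hmem)⟩ hmem)
  exact hxyu (hvu ⟨b, ⟨a, hxa, hab_v⟩, hvsymm.symm _ _ hby⟩)

theorem isClosedMap_quotient_mk_of_isClosed [TopologicalSpace X] [CompactSpace X]
    (s : Setoid X) (hR : IsClosed {p : X × X | s.r p.1 p.2}) :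
    IsClosedMap (Quotient.mk s) := by
  intro C hC
  refine isClosed_coinduced.mpr ?_
  have saturation : Quotient.mk s ⁻¹' (Quotient.mk s '' C) =
      Prod.fst '' ({p : X × X | s.r p.1 p.2} ∩ univ ×ˢ C) := by
    ext z
    simp only [mem_preimage, mem_image, mem_inter_iff, mem_ofPred_eq, mem_prod, mem_univ,
      true_and, Prod.exists, exists_and_right, exists_eq_right, Quotient.eq]
    exact ⟨fun ⟨w, hw, hwz⟩ => ⟨w, s.symm hwz, hw⟩, fun ⟨w, hzw, hw⟩ => ⟨w, hw, s.symm hzw⟩⟩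
  change IsClosed (Quotient.mk s ⁻¹' (Quotient.mk s '' C))
  rw [saturation]
  exact isClosedMap_fst_of_compactSpace _ (hR.inter (isClosed_univ.prod hC))

theorem t2Space_quotient_of_isClosed [TopologicalSpace X] [CompactSpace X]
    (s : Setoid X) (hR : IsClosed {p : X × X | s.r p.1 p.2}) :
    T2Space (Quotient s) := by
  have hproper : IsProperMap (Quotient.mk s) := by
    refine isProperMap_iff_isClosedMap_and_compact_fibers.mpr
      ⟨continuous_quotient_mk', isClosedMap_quotient_mk_of_isClosed s hR, ?_⟩
    intro q
    obtain ⟨x, rfl⟩ := q.exists_rep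
    convert (hR.preimage (Continuous.prodMk_right x)).isCompact using 1
    ext y
    simp [Quotient.eq, s.comm']
  have hdiag : Prod.map (Quotient.mk s) (Quotient.mk s) '' {p | s.r p.1 p.2} =
      diagonal (Quotient s) := by
    ext ⟨p, q⟩
    obtain ⟨x, rfl⟩ := p.exists_rep
    obtain ⟨y, rfl⟩ := q.exists_rep
    simp only [mem_image, Prod.exists, Prod.map, Prod.mk.injEq, mem_diagonal_iff]
    exact ⟨fun ⟨a, b, hab, ha, hb⟩ => ha ▸ hb ▸ Quotient.sound hab,
      fun h => ⟨x, y, Quotient.exact h, rfl, rfl⟩⟩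
  rw [t2_iff_isClosed_diagonal, ← hdiag]
  exact (hproper.prodMap hproper).isClosedMap _ hR

end Setoid

theorem stmt6_general {X : Type*} [UniformSpace X] [CompactSpace X]
    (s : Setoid X)
    (hcl : ∀ x : X, IsClosed {y | s.r y x})
    (hfin : ∀ u ∈ uniformity X,
      {c : Set X | (∃ x, c = {y | s.r x y}) ∧ ¬ c ×ˢ c ⊆ u}.Finite) :
    T2Space (Quotient s) :=
  s.t2Space_quotient_of_isClosed (s.isClosed_setOf_rel_of_finite_not_small hcl hfin)

/-- A topologically quasiconvex equivalence relation (closed classes, only finitely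
many classes fail to be `u`-small for each entourage `u`) on a compact Hausdorff
space has Hausdorff quotient. -/
theorem stmt6 {X : Type*} [UniformSpace X] [CompactSpace X] [T2Space X]
    (s : Setoid X)
    (hcl : ∀ x : X, IsClosed {y | s.r y x})
    (hfin : ∀ u ∈ uniformity X,
      {c : Set X | (∃ x, c = {y | s.r x y}) ∧ ¬ c ×ˢ c ⊆ u}.Finite) :
    T2Space (Quotient s) :=
  stmt6_general s hcl hfin
end

section
/- Let f : X → Y be a continuous surjection between compact Hausdorff spaces. For A ⊆ Y define the equivalence relation ∼_A on X whose nontrivial classes are the fibers f⁻¹(q) for q ∉ A, and set X_A = X/∼_A. Then the following are equivalent: (1) the relation whose classes are all fibers of f is topologically quasiconvex; (2) X_A is Hausdorff for every A ⊆ Y; (3) X_{{p}} is Hausdorff for every p ∈ Y. -/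
/-- The equivalence relation on `X` whose nontrivial classes are the fibers
`f ⁻¹ {q}` for `q ∉ S`. -/
def collapseSetoid {X Y : Type*} (f : X → Y) (S : Set Y) : Setoid X where
  r x y := x = y ∨ (f x = f y ∧ f x ∉ S)
  iseqv := by
    constructor
    · intro x; exact Or.inl rfl
    · rintro x y (rfl | ⟨h, hn⟩)
      · exact Or.inl rfl
      · exact Or.inr ⟨h.symm, h ▸ hn⟩
    · rintro x y z (rfl | ⟨h1, hn1⟩) hyz
      · exact hyz
      · rcases hyz with rfl | ⟨h2, hn2⟩
        · exact Or.inr ⟨h1, hn1⟩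
        · exact Or.inr ⟨h1.trans h2, hn1⟩

/-- `f` is topologically quasiconvex: the fibers are closed and, for each entourage
`u`, only finitely many fibers fail to be `u`-small. -/
def TopQuasiconvex {X Y : Type*} [UniformSpace X] (f : X → Y) : Prop :=
  (∀ y : Y, IsClosed (f ⁻¹' {y})) ∧
    ∀ u ∈ uniformity X, {y : Y | ¬ (f ⁻¹' {y}) ×ˢ (f ⁻¹' {y}) ⊆ u}.Finite

/-!
For a compact Hausdorff `X`, a quotient `X / ∼` is Hausdorff exactly when the graph of `∼` is
closed in `X × X`: a Hausdorff quotient pulls the diagonal back to the graph, and conversely a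
closed graph makes the quotient map closed (saturations are projections of closed sets), so
saturated neighbourhoods of two disjoint closed classes separate their images. Everything thus
reduces to closedness of the graphs `R_A` of the partial collapses.

If `f` is quasiconvex and `u` is a closed entourage, `R_A` lies in `u` together with the pairs over
the finitely many non-`u`-small fibers outside `A`, a closed set; a pair off the diagonal avoids
some closed entourage, so the closure of `R_A` stays in `R_A`.

Conversely, for an open entourage `v` let `S` be the set of points with non-`v`-small fiber. For
each `p`, `S \ {p}` is the image under `f ∘ fst` of the compact set `R_{p} \ v`, hence closed. So
`S` has no accumulation point, and it is finite because `Y` is compact.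
-/

open Set Filter Topology Uniformity

namespace Setoid

variable {X : Type*} [TopologicalSpace X] (s : Setoid X)

theorem isClosedMap_quotientMk [CompactSpace X] (hs : IsClosed {z : X × X | s z.1 z.2}) :
    IsClosedMap (Quotient.mk s) := by
  intro C hC
  have hsat : Quotient.mk s ⁻¹' (Quotient.mk s '' C) =
      Prod.snd '' ({z : X × X | s z.1 z.2} ∩ C ×ˢ univ) := by
    ext x
    constructor
    · rintro ⟨c, hc, hcx⟩
      exact ⟨(c, x), ⟨Quotient.exact hcx, hc, trivial⟩, rfl⟩
    · rintro ⟨⟨c, x⟩, ⟨hcx, hc, -⟩, rfl⟩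
      exact ⟨c, hc, Quotient.sound hcx⟩
  refine (isQuotientMap_quotient_mk' (s := s)).isClosed_preimage.1 ?_
  change IsClosed (Quotient.mk s ⁻¹' _)
  rw [hsat]
  exact isClosedMap_snd_of_compactSpace _ (hs.inter (hC.prod isClosed_univ))

theorem t2Space_quotient [CompactSpace X] [T2Space X] (hs : IsClosed {z : X × X | s z.1 z.2}) :
    T2Space (Quotient s) := by
  refine ⟨Quotient.ind₂ fun a b hab => ?_⟩
  have hclass : ∀ c, IsClosed {x | s x c} := fun c =>
    hs.preimage (continuous_id.prodMk continuous_const)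
  have hdisj : Disjoint {x | s x a} {x | s x b} := disjoint_left.2 fun x hxa hxb =>
    hab ((Quotient.sound hxa).symm.trans (Quotient.sound hxb))
  obtain ⟨U, V, hU, hV, haU, hbV, hUV⟩ := normal_separation (hclass a) (hclass b) hdisj
  have hq := isClosedMap_quotientMk s hs
  refine ⟨kernImage (Quotient.mk s) U, kernImage (Quotient.mk s) V,
    isClosedMap_iff_kernImage.1 hq hU, isClosedMap_iff_kernImage.1 hq hV,
    fun x hx => haU (Quotient.exact hx), fun x hx => hbV (Quotient.exact hx), ?_⟩
  refine disjoint_left.2 (Quotient.ind fun x hxU hxV => ?_)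
  exact disjoint_left.1 hUV (hxU rfl) (hxV rfl)

theorem isClosed_of_t2Space_quotient [T2Space (Quotient s)] :
    IsClosed {z : X × X | s z.1 z.2} := by
  have hgraph : {z : X × X | s z.1 z.2} =
      Prod.map (Quotient.mk s) (Quotient.mk s) ⁻¹' diagonal (Quotient s) := by
    ext z
    exact Quotient.eq.symm
  rw [hgraph]
  exact isClosed_diagonal.preimage (continuous_quotient_mk'.prodMap continuous_quotient_mk')

theorem t2Space_quotient_iff_isClosed [CompactSpace X] [T2Space X] :
    T2Space (Quotient s) ↔ IsClosed {z : X × X | s z.1 z.2} :=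
  ⟨fun _ => s.isClosed_of_t2Space_quotient, s.t2Space_quotient⟩

end Setoid

theorem Set.Finite.of_forall_isClosed_diff_singleton {Y : Type*} [TopologicalSpace Y]
    [CompactSpace Y] {S : Set Y} (hS : ∀ p, IsClosed (S \ {p})) : S.Finite := by
  by_contra hinf
  obtain ⟨p, hp⟩ := Set.Infinite.exists_accPt_principal hinf
  rw [accPt_principal_iff_clusterPt, ← mem_closure_iff_clusterPt, (hS p).closure_eq] at hp
  exact hp.2 rfl

section Quasiconvex

variable {X Y : Type*} [UniformSpace X] [TopologicalSpace Y] [T2Space Y] {f : X → Y}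

theorem TopQuasiconvex.isClosed_collapseSetoid [T2Space X] (hf : Continuous f)
    (h : TopQuasiconvex f) (A : Set Y) :
    IsClosed {z : X × X | collapseSetoid f A z.1 z.2} := by
  refine isClosed_of_closure_subset fun z hz => ?_
  by_cases hdiag : z.1 = z.2
  · exact Or.inl hdiag
  obtain ⟨u, hu, huc, hzu⟩ : ∃ u ∈ 𝓤 X, IsClosed u ∧ z ∉ u := by
    by_contra! hall
    exact hdiag (eq_of_uniformity_basis uniformity_hasBasis_closed fun hi => hall _ hi.1 hi.2)
  set C := {w : X × X | f w.1 = f w.2} ∩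
    (fun w : X × X => f w.1) ⁻¹' ({y | ¬ (f ⁻¹' {y}) ×ˢ (f ⁻¹' {y}) ⊆ u} \ A)
  have hC : IsClosed C :=
    (isClosed_eq (hf.comp continuous_fst) (hf.comp continuous_snd)).inter
      (((h.2 u hu).sdiff.isClosed).preimage (hf.comp continuous_fst))
  have hsub : {w : X × X | collapseSetoid f A w.1 w.2} ⊆ u ∪ C := by
    rintro ⟨a, b⟩ (hab | ⟨hab, haA⟩)
    · obtain rfl : a = b := hab
      exact Or.inl (refl_mem_uniformity hu)
    · by_cases habu : (a, b) ∈ u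
      · exact Or.inl habu
      · exact Or.inr ⟨hab, fun hsmall => habu (hsmall ⟨rfl, hab.symm⟩), haA⟩
  obtain hzu' | ⟨hfz, -, hzA⟩ := closure_minimal hsub (huc.union hC) hz
  · exact absurd hzu' hzu
  · exact Or.inr ⟨hfz, hzA⟩

theorem topQuasiconvex_of_isClosed_collapseSetoid_singleton [CompactSpace X] [CompactSpace Y]
    (hf : Continuous f) (h : ∀ p, IsClosed {z : X × X | collapseSetoid f {p} z.1 z.2}) :
    TopQuasiconvex f := by
  refine ⟨fun y => isClosed_singleton.preimage hf, fun u hu => ?_⟩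
  obtain ⟨v, ⟨hv, hvo⟩, hvu⟩ := uniformity_hasBasis_open.mem_iff.1 hu
  refine Finite.subset (s := {y | ¬ (f ⁻¹' {y}) ×ˢ (f ⁻¹' {y}) ⊆ v}) ?_
    fun y hy hsmall => hy (hsmall.trans hvu)
  refine Finite.of_forall_isClosed_diff_singleton fun p => ?_
  have himage : {y | ¬ (f ⁻¹' {y}) ×ˢ (f ⁻¹' {y}) ⊆ v} \ {p} =
      (fun z : X × X => f z.1) '' ({z | collapseSetoid f {p} z.1 z.2} ∩ vᶜ) := by
    ext y
    constructor
    · rintro ⟨hy, hyp⟩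
      obtain ⟨⟨a, b⟩, ⟨ha, hb⟩, habv⟩ := not_subset.1 hy
      exact ⟨(a, b), ⟨Or.inr ⟨ha.trans hb.symm, ha ▸ hyp⟩, habv⟩, ha⟩
    · rintro ⟨⟨a, b⟩, ⟨hab | ⟨hab, hap⟩, habv⟩, rfl⟩
      · obtain rfl : a = b := hab
        exact absurd (refl_mem_uniformity hv) habv
      · exact ⟨fun hsmall => habv (hsmall ⟨rfl, hab.symm⟩), hap⟩
  rw [himage]
  exact (((h p).inter hvo.isClosed_compl).isCompact.image (hf.comp continuous_fst)).isClosed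

end Quasiconvex

theorem stmt7_general {X Y : Type*} [UniformSpace X] [CompactSpace X] [T2Space X]
    [TopologicalSpace Y] [CompactSpace Y] [T2Space Y]
    (f : X → Y) (hf : Continuous f) :
    (TopQuasiconvex f ↔ ∀ A : Set Y, T2Space (Quotient (collapseSetoid f A))) ∧
    ((∀ A : Set Y, T2Space (Quotient (collapseSetoid f A))) ↔
      ∀ p : Y, T2Space (Quotient (collapseSetoid f {p}))) := by
  simp only [Setoid.t2Space_quotient_iff_isClosed]
  have hpoint := topQuasiconvex_of_isClosed_collapseSetoid_singleton hf
  have hall := TopQuasiconvex.isClosed_collapseSetoid hf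
  exact ⟨⟨hall, fun h => hpoint fun p => h {p}⟩, ⟨fun h p => h {p}, fun h => hall (hpoint h)⟩⟩

/-- For a continuous surjection `f : X → Y` of compact Hausdorff spaces:
`f` is topologically quasiconvex ↔ every partial collapse `X_A` is Hausdorff ↔
every one-point collapse `X_p` is Hausdorff. -/
theorem stmt7 {X Y : Type*} [UniformSpace X] [CompactSpace X] [T2Space X]
    [TopologicalSpace Y] [CompactSpace Y] [T2Space Y]
    (f : X → Y) (hf : Continuous f) (hsurj : Function.Surjective f) :
    (TopQuasiconvex f ↔ ∀ A : Set Y, T2Space (Quotient (collapseSetoid f A))) ∧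
    ((∀ A : Set Y, T2Space (Quotient (collapseSetoid f A))) ↔
      ∀ p : Y, T2Space (Quotient (collapseSetoid f {p}))) :=
  stmt7_general f hf
end
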